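/- Let G = (V, E) be a finite simple undirected graph, let k ∈ ℕ, and let e₁ = (u₁, v₁) be an anchor edge joining two non-adjacent vertices of G with follower set F({e₁}, G). Then for every candidate edge e = (u, v) with u ∈ F({e₁}, G), v ∈ F({e₁}, G) ∪ V(C_k(G)), u ≠ v, and u, v non-adjacent in G, we have F({e}, G) ⊆ F({e₁}, G). -/

import Mathlib

/-!
An added edge `uv` whose endpoints both lie in the `k`-core of `G + e₁` cannot create new core
vertices beyond those of `G + e₁`: if `S` witnesses that `x` is in the `k`-core of `G + uv`, then
`S ∪ C_k(G + e₁)` witnesses it in `G + e₁`, because every vertex of `S` that uses the edge `uv`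
is `u` or `v` and already has `k` neighbours inside `C_k(G + e₁)`.
-/

open SimpleGraph

variable {V : Type*}

/-- The vertex set of the `k`-core of `G`: the largest set `S` such that every
vertex of `S` has at least `k` neighbors in `S` (realized as the union of all
such sets). -/
def coreSet (G : SimpleGraph V) (k : ℕ) : Set V :=
  {u | ∃ S : Set V, u ∈ S ∧ ∀ v ∈ S, k ≤ (S ∩ G.neighborSet v).ncard}

/-- The followers of a set `A` of anchor edges: vertices of the `k`-core of `G + A`
that are not in the `k`-core of `G`. -/
def followers (G : SimpleGraph V) (k : ℕ) (A : Set (Sym2 V)) : Set V :=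
  coreSet (G ⊔ SimpleGraph.fromEdgeSet A) k \ coreSet G k

lemma subset_coreSet {G : SimpleGraph V} {k : ℕ} {S : Set V}
    (hS : ∀ v ∈ S, k ≤ (S ∩ G.neighborSet v).ncard) : S ⊆ coreSet G k :=
  fun _ hx => ⟨S, hx, hS⟩

lemma le_ncard_coreSet_inter_neighborSet [Finite V] {G : SimpleGraph V} {k : ℕ} {v : V}
    (hv : v ∈ coreSet G k) : k ≤ (coreSet G k ∩ G.neighborSet v).ncard := by
  obtain ⟨S, hvS, hS⟩ := hv
  exact (hS v hvS).trans <| Set.ncard_le_ncard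
    (Set.inter_subset_inter_left _ (subset_coreSet hS)) (Set.toFinite _)

lemma coreSet_mono [Finite V] {G H : SimpleGraph V} (h : G ≤ H) (k : ℕ) :
    coreSet G k ⊆ coreSet H k := by
  rintro v ⟨S, hvS, hS⟩
  exact ⟨S, hvS, fun w hw => (hS w hw).trans <|
    Set.ncard_le_ncard (Set.inter_subset_inter_right _ fun _ hx => h hx) (Set.toFinite _)⟩

lemma adj_of_sup_fromEdgeSet_adj {G H : SimpleGraph V} {A : Set (Sym2 V)} {w y : V}
    (hGH : G ≤ H) (hw : ∀ e ∈ A, w ∉ e) (hwy : (G ⊔ fromEdgeSet A).Adj w y) : H.Adj w y := by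
  rcases hwy with hG | ⟨hA, -⟩
  · exact hGH hG
  · exact absurd (Sym2.mem_mk_left w y) (hw _ hA)

lemma coreSet_sup_fromEdgeSet_subset [Finite V] {G H : SimpleGraph V} {k : ℕ}
    {A : Set (Sym2 V)} (hGH : G ≤ H) (hA : ∀ e ∈ A, ∀ x ∈ e, x ∈ coreSet H k) :
    coreSet (G ⊔ fromEdgeSet A) k ⊆ coreSet H k := by
  rintro x ⟨S, hxS, hS⟩
  refine subset_coreSet (S := S ∪ coreSet H k) (fun w hw => ?_) (Or.inl hxS)
  by_cases hwH : w ∈ coreSet H k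
  · exact (le_ncard_coreSet_inter_neighborSet hwH).trans <| Set.ncard_le_ncard
      (Set.inter_subset_inter_left _ Set.subset_union_right) (Set.toFinite _)
  have hwS : w ∈ S := hw.resolve_right hwH
  have hw_notin : ∀ e ∈ A, w ∉ e := fun e he hwe => hwH (hA e he w hwe)
  exact (hS w hwS).trans <| Set.ncard_le_ncard
    (Set.inter_subset_inter Set.subset_union_left
      fun _ hy => adj_of_sup_fromEdgeSet_adj hGH hw_notin hy)
    (Set.toFinite _)

theorem stmt_4_general [Fintype V] (G : SimpleGraph V) (k : ℕ)
    (u₁ v₁ : V) :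
    ∀ u v : V, u ∈ followers G k {s(u₁, v₁)} →
      v ∈ followers G k {s(u₁, v₁)} ∪ coreSet G k →
      u ≠ v → ¬ G.Adj u v →
      followers G k {s(u, v)} ⊆ followers G k {s(u₁, v₁)} := by
  intro u v hu hv _ _
  have hG_le : G ≤ G ⊔ fromEdgeSet {s(u₁, v₁)} := le_sup_left
  have hv' : v ∈ coreSet (G ⊔ fromEdgeSet {s(u₁, v₁)}) k :=
    hv.elim (·.1) (coreSet_mono hG_le k ·)
  refine Set.sdiff_subset_sdiff_left (coreSet_sup_fromEdgeSet_subset hG_le ?_)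
  rintro e rfl x hx
  rcases Sym2.mem_iff.mp hx with rfl | rfl
  exacts [hu.1, hv']

/-- Given an anchor edge `e₁ = (u₁, v₁)` joining two non-adjacent vertices of `G`,
for every candidate edge `e = (u, v)` with `u` a follower of `e₁`, `v` a follower of
`e₁` or a `k`-core vertex of `G`, `u ≠ v`, and `u, v` non-adjacent in `G`, the
followers of `e` are contained in the followers of `e₁`. -/
theorem stmt_4 [Fintype V] (G : SimpleGraph V) (k : ℕ)
    (u₁ v₁ : V) (hu₁v₁ : u₁ ≠ v₁) (hadj₁ : ¬ G.Adj u₁ v₁) :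
    ∀ u v : V, u ∈ followers G k {s(u₁, v₁)} →
      v ∈ followers G k {s(u₁, v₁)} ∪ coreSet G k →
      u ≠ v → ¬ G.Adj u v →
      followers G k {s(u, v)} ⊆ followers G k {s(u₁, v₁)} :=
  stmt_4_general G k u₁ v₁
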